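/- arXiv:1512.02686 — 4 statements merged into one kernel-verified Lean document; each statement's English description precedes it below -/
import Mathlib

section
/- (Agmon's inequality on the line) For every continuously differentiable function u : ℝ → ℝ such that u and its derivative u' are square integrable on ℝ and u(x) → 0 as x → ±∞, one has sup_{x ∈ ℝ} u(x)² ≤ ‖u‖_{L²(ℝ)} · ‖u'‖_{L²(ℝ)}; in particular ‖u‖_{L^∞(ℝ)} ≤ ‖u‖_{L²(ℝ)}^{1/2} ‖u'‖_{L²(ℝ)}^{1/2}. -/
/-!
Since `u²` and `(u²)' = 2 u u'` are integrable, `u²` vanishes at `±∞`, so `u(x)²` equals both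
`∫_{-∞}^x 2 u u'` and `-∫_x^∞ 2 u u'`. Averaging the two gives `u(x)² ≤ ∫ |u u'|`, and
Cauchy–Schwarz bounds this by `‖u‖₂ ‖u'‖₂`.
-/

open MeasureTheory Filter

theorem integral_abs_mul_le_sqrt_mul_sqrt {α : Type*} [MeasurableSpace α] {μ : Measure α}
    {f g : α → ℝ} (hf : MemLp f 2 μ) (hg : MemLp g 2 μ) :
    ∫ a, |f a * g a| ∂μ ≤ √(∫ a, f a ^ 2 ∂μ) * √(∫ a, g a ^ 2 ∂μ) := by
  have h := integral_mul_norm_le_Lp_mul_Lq Real.HolderConjugate.two_two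
    (by simpa using hf) (by simpa using hg)
  simpa [abs_mul, Real.sqrt_eq_rpow, Real.rpow_two] using h

theorem two_mul_norm_le_integral_norm_of_hasDerivAt {E : Type*} [NormedAddCommGroup E]
    [NormedSpace ℝ E] [CompleteSpace E] {f f' : ℝ → E} (hderiv : ∀ x, HasDerivAt f (f' x) x)
    (hf' : Integrable f') (hf : Integrable f) (x : ℝ) :
    2 * ‖f x‖ ≤ ∫ t, ‖f' t‖ := by
  have hbot : Tendsto f atBot (nhds 0) :=
    tendsto_zero_of_hasDerivAt_of_integrableOn_Iic (a := 0) (fun t _ ↦ hderiv t)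
      hf'.integrableOn hf.integrableOn
  have htop : Tendsto f atTop (nhds 0) :=
    tendsto_zero_of_hasDerivAt_of_integrableOn_Ioi (a := 0) (fun t _ ↦ hderiv t)
      hf'.integrableOn hf.integrableOn
  have hleft : ∫ t in Set.Iic x, f' t = f x := by
    simpa using integral_Iic_of_hasDerivAt_of_tendsto' (fun t _ ↦ hderiv t) hf'.integrableOn hbot
  have hright : ∫ t in Set.Ioi x, f' t = -f x := by
    simpa using integral_Ioi_of_hasDerivAt_of_tendsto' (fun t _ ↦ hderiv t) hf'.integrableOn htop
  have hleft_le : ‖f x‖ ≤ ∫ t in Set.Iic x, ‖f' t‖ :=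
    hleft ▸ norm_integral_le_integral_norm _
  have hright_le : ‖f x‖ ≤ ∫ t in Set.Ioi x, ‖f' t‖ := by
    simpa [hright] using norm_integral_le_integral_norm (μ := volume.restrict (Set.Ioi x)) f'
  rw [← intervalIntegral.integral_Iic_add_Ioi hf'.norm.integrableOn hf'.norm.integrableOn]
  linarith

theorem sq_le_integral_abs_mul_deriv {u : ℝ → ℝ} (hu : Differentiable ℝ u)
    (hu2 : Integrable (fun x ↦ u x ^ 2)) (huu' : Integrable (fun x ↦ u x * deriv u x))
    (x : ℝ) : u x ^ 2 ≤ ∫ t, |u t * deriv u t| := by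
  have hderiv : ∀ t, HasDerivAt (fun y ↦ u y ^ 2) (2 * (u t * deriv u t)) t := fun t ↦ by
    simpa [mul_assoc] using (hu t).hasDerivAt.fun_pow 2
  have h := two_mul_norm_le_integral_norm_of_hasDerivAt hderiv (huu'.const_mul 2) hu2 x
  simp only [Real.norm_eq_abs, abs_mul (2 : ℝ), abs_two, integral_const_mul, abs_sq] at h
  linarith

theorem sq_le_sqrt_integral_sq_mul_sqrt_integral_deriv_sq {u : ℝ → ℝ} (hu : Differentiable ℝ u)
    (hu2 : Integrable (fun x ↦ u x ^ 2)) (hu'2 : Integrable (fun x ↦ deriv u x ^ 2)) (x : ℝ) :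
    u x ^ 2 ≤ √(∫ t, u t ^ 2) * √(∫ t, deriv u t ^ 2) := by
  have hmem : MemLp u 2 volume :=
    (memLp_two_iff_integrable_sq hu.continuous.aestronglyMeasurable).2 hu2
  have hmem' : MemLp (deriv u) 2 volume :=
    (memLp_two_iff_integrable_sq (measurable_deriv u).aestronglyMeasurable).2 hu'2
  calc u x ^ 2 ≤ ∫ t, |u t * deriv u t| :=
        sq_le_integral_abs_mul_deriv hu hu2 (hmem.integrable_mul hmem') x
    _ ≤ _ := integral_abs_mul_le_sqrt_mul_sqrt hmem hmem'

theorem agmon_inequality_general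
    (u : ℝ → ℝ) (hu : ContDiff ℝ 1 u)
    (hu2 : Integrable (fun x => (u x) ^ 2))
    (hu'2 : Integrable (fun x => (deriv u x) ^ 2)) :
    (⨆ x : ℝ, (u x) ^ 2) ≤
      Real.sqrt (∫ x, (u x) ^ 2) * Real.sqrt (∫ x, (deriv u x) ^ 2) ∧
    (⨆ x : ℝ, |u x|) ≤
      (Real.sqrt (∫ x, (u x) ^ 2)) ^ ((1 : ℝ) / 2) *
        (Real.sqrt (∫ x, (deriv u x) ^ 2)) ^ ((1 : ℝ) / 2) := by
  have key := sq_le_sqrt_integral_sq_mul_sqrt_integral_deriv_sq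
    (hu.differentiable one_ne_zero) hu2 hu'2
  refine ⟨ciSup_le key, ciSup_le fun x ↦ ?_⟩
  rw [← Real.sqrt_eq_rpow, ← Real.sqrt_eq_rpow, ← Real.sqrt_mul (Real.sqrt_nonneg _),
    ← Real.sqrt_sq_eq_abs]
  exact Real.sqrt_le_sqrt (key x)

/-- Agmon's inequality on the line. -/
theorem agmon_inequality
    (u : ℝ → ℝ) (hu : ContDiff ℝ 1 u)
    (hu2 : Integrable (fun x => (u x) ^ 2))
    (hu'2 : Integrable (fun x => (deriv u x) ^ 2))
    (htop : Tendsto u atTop (nhds 0)) (hbot : Tendsto u atBot (nhds 0)) :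
    (⨆ x : ℝ, (u x) ^ 2) ≤
      Real.sqrt (∫ x, (u x) ^ 2) * Real.sqrt (∫ x, (deriv u x) ^ 2) ∧
    (⨆ x : ℝ, |u x|) ≤
      (Real.sqrt (∫ x, (u x) ^ 2)) ^ ((1 : ℝ) / 2) *
        (Real.sqrt (∫ x, (deriv u x) ^ 2)) ^ ((1 : ℝ) / 2) :=
  agmon_inequality_general u hu hu2 hu'2
end

section
/- For every continuously differentiable function v : ℝ → ℝ such that v and v' are square integrable on ℝ and v(x) → 0 as x → ±∞, one has ∫_ℝ v(x)⁴ dx ≤ ‖v‖_{L²(ℝ)}³ ‖v'‖_{L²(ℝ)}. -/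
/-!
Since `v ^ 2` vanishes at `±∞`, `v x ^ 2` is both `∫_{-∞}^x 2 v v'` and `-∫_x^∞ 2 v v'`, so
`sup v ^ 2 ≤ ∫ |v v'| ≤ ‖v‖₂ ‖v'‖₂` by Cauchy–Schwarz. Then `∫ v ^ 4 ≤ sup v ^ 2 · ∫ v ^ 2`.
-/

open MeasureTheory Filter Set Topology

section CauchySchwarz

variable {α : Type*} [MeasurableSpace α] {μ : Measure α} {f g : α → ℝ}

theorem integrable_mul_of_integrable_sq (hf : AEStronglyMeasurable f μ)
    (hg : AEStronglyMeasurable g μ) (hf2 : Integrable (fun x => f x ^ 2) μ)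
    (hg2 : Integrable (fun x => g x ^ 2) μ) : Integrable (fun x => f x * g x) μ :=
  ((memLp_two_iff_integrable_sq hf).2 hf2).integrable_mul
    ((memLp_two_iff_integrable_sq hg).2 hg2)

theorem integral_abs_mul_le_sqrt_mul_sqrt_s2 (hf : AEStronglyMeasurable f μ)
    (hg : AEStronglyMeasurable g μ) (hf2 : Integrable (fun x => f x ^ 2) μ)
    (hg2 : Integrable (fun x => g x ^ 2) μ) :
    ∫ x, |f x * g x| ∂μ ≤ √(∫ x, f x ^ 2 ∂μ) * √(∫ x, g x ^ 2 ∂μ) := by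
  have habs {h : α → ℝ} (hh : AEStronglyMeasurable h μ) (hh2 : Integrable (fun x => h x ^ 2) μ) :
      MemLp (fun x => |h x|) (ENNReal.ofReal 2) μ := by
    rw [ENNReal.ofReal_ofNat]
    exact (memLp_two_iff_integrable_sq hh.norm).2
      (by simpa only [Real.norm_eq_abs, sq_abs] using hh2)
  have := integral_mul_le_Lp_mul_Lq_of_nonneg Real.HolderConjugate.two_two
    (ae_of_all _ fun x => abs_nonneg (f x)) (ae_of_all _ fun x => abs_nonneg (g x))
    (habs hf hf2) (habs hg hg2)
  simpa only [abs_mul, Real.rpow_two, sq_abs, Real.sqrt_eq_rpow] using this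

end CauchySchwarz

theorem two_mul_norm_le_integral_norm_deriv {E : Type*} [NormedAddCommGroup E]
    [NormedSpace ℝ E] [CompleteSpace E] {f f' : ℝ → E} (hf : ∀ x, HasDerivAt f (f' x) x)
    (hf' : Integrable f') (htop : Tendsto f atTop (𝓝 0)) (hbot : Tendsto f atBot (𝓝 0))
    (x : ℝ) : 2 * ‖f x‖ ≤ ∫ y, ‖f' y‖ := by
  have hleft : ∫ y in Iic x, f' y = f x := by
    simpa using integral_Iic_of_hasDerivAt_of_tendsto' (fun y _ => hf y) hf'.integrableOn hbot
  have hright : ∫ y in Ioi x, f' y = -f x := by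
    simpa using integral_Ioi_of_hasDerivAt_of_tendsto' (fun y _ => hf y) hf'.integrableOn htop
  have hsplit := intervalIntegral.integral_Iic_add_Ioi (b := x)
    hf'.norm.integrableOn hf'.norm.integrableOn
  calc 2 * ‖f x‖ = ‖∫ y in Iic x, f' y‖ + ‖∫ y in Ioi x, f' y‖ := by
        rw [hleft, hright, norm_neg, two_mul]
    _ ≤ (∫ y in Iic x, ‖f' y‖) + ∫ y in Ioi x, ‖f' y‖ :=
        add_le_add (norm_integral_le_integral_norm _) (norm_integral_le_integral_norm _)
    _ = ∫ y, ‖f' y‖ := hsplit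

theorem sq_le_integral_abs_mul_deriv_s2 {v : ℝ → ℝ} (hv : Differentiable ℝ v)
    (hv2 : Integrable (fun x => v x ^ 2)) (hv'2 : Integrable (fun x => deriv v x ^ 2))
    (htop : Tendsto v atTop (𝓝 0)) (hbot : Tendsto v atBot (𝓝 0)) (x : ℝ) :
    v x ^ 2 ≤ ∫ y, |v y * deriv v y| := by
  have hderiv (y : ℝ) : HasDerivAt (fun y => v y ^ 2) (2 * (v y * deriv v y)) y :=
    ((hv y).hasDerivAt.fun_pow 2).congr_deriv (by push_cast; ring)
  have hint : Integrable (fun y => 2 * (v y * deriv v y)) :=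
    (integrable_mul_of_integrable_sq hv.continuous.aestronglyMeasurable
      (measurable_deriv v).aestronglyMeasurable hv2 hv'2).const_mul 2
  have := two_mul_norm_le_integral_norm_deriv hderiv hint
    (by simpa using htop.pow 2) (by simpa using hbot.pow 2) x
  simp only [Real.norm_eq_abs, abs_mul (2 : ℝ), abs_two, abs_pow, sq_abs,
    integral_const_mul] at this
  linarith

theorem integral_pow_four_le_mul_integral_sq {α : Type*} [MeasurableSpace α] {μ : Measure α}
    {v : α → ℝ} {C : ℝ} (hv : AEStronglyMeasurable v μ) (hv2 : Integrable (fun x => v x ^ 2) μ)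
    (hC : ∀ x, v x ^ 2 ≤ C) : ∫ x, v x ^ 4 ∂μ ≤ C * ∫ x, v x ^ 2 ∂μ := by
  have hpoint (x : α) : v x ^ 4 ≤ C * v x ^ 2 := by
    nlinarith [hC x, sq_nonneg (v x)]
  have hint : Integrable (fun x => v x ^ 4) μ := by
    refine (hv2.const_mul C).mono' (hv.pow 4) (ae_of_all _ fun x => ?_)
    rw [Real.norm_of_nonneg (by positivity)]
    exact hpoint x
  rw [← integral_const_mul]
  exact integral_mono hint (hv2.const_mul C) hpoint

/-- Quartic interpolation estimate: ∫ v⁴ ≤ ‖v‖₂³ ‖v'‖₂. -/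
theorem integral_pow_four_le
    (v : ℝ → ℝ) (hv : ContDiff ℝ 1 v)
    (hv2 : Integrable (fun x => (v x) ^ 2))
    (hv'2 : Integrable (fun x => (deriv v x) ^ 2))
    (htop : Tendsto v atTop (nhds 0)) (hbot : Tendsto v atBot (nhds 0)) :
    ∫ x, (v x) ^ 4 ≤
      (Real.sqrt (∫ x, (v x) ^ 2)) ^ 3 * Real.sqrt (∫ x, (deriv v x) ^ 2) := by
  have hdiff : Differentiable ℝ v := hv.differentiable one_ne_zero
  have hsup := sq_le_integral_abs_mul_deriv_s2 hdiff hv2 hv'2 htop hbot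
  have hCS := integral_abs_mul_le_sqrt_mul_sqrt_s2 hdiff.continuous.aestronglyMeasurable
    (measurable_deriv v).aestronglyMeasurable hv2 hv'2
  have hsq : Real.sqrt (∫ x, v x ^ 2) ^ 2 = ∫ x, v x ^ 2 :=
    Real.sq_sqrt (integral_nonneg fun x => sq_nonneg _)
  calc ∫ x, v x ^ 4 ≤ (∫ y, |v y * deriv v y|) * ∫ x, v x ^ 2 :=
        integral_pow_four_le_mul_integral_sq hdiff.continuous.aestronglyMeasurable hv2 hsup
    _ ≤ (Real.sqrt (∫ x, v x ^ 2) * Real.sqrt (∫ x, deriv v x ^ 2)) * ∫ x, v x ^ 2 := by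
        gcongr
    _ = Real.sqrt (∫ x, v x ^ 2) ^ 3 * Real.sqrt (∫ x, deriv v x ^ 2) := by
        linear_combination (-(Real.sqrt (∫ x, v x ^ 2) * Real.sqrt (∫ x, deriv v x ^ 2))) * hsq
end

section
/- There exists a constant C > 0 such that for every continuously differentiable function v : ℝ → ℝ with v and v' square integrable on ℝ and v(x) → 0 as x → ±∞, the second KdV invariant I(v) = ∫_ℝ ( v'(x)² − v(x)³/3 ) dx satisfies (2/3)‖v'‖_{L²(ℝ)}² − C‖v‖_{L²(ℝ)}^{10/3} ≤ I(v) ≤ (4/3)‖v'‖_{L²(ℝ)}² + C‖v‖_{L²(ℝ)}^{10/3}. -/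
/-!
Agmon's inequality `v(x)² = ∫_{-∞}^x 2 v v' ≤ 2 ‖v‖₂ ‖v'‖₂` bounds `‖v‖_∞`, hence
`|∫ v³| ≤ ‖v‖_∞ ‖v‖₂² ≤ (4 ‖v'‖₂²)^{1/4} (‖v‖₂^{10/3})^{3/4}`, and Young's inequality with
exponents `4` and `4/3` turns this into `|∫ v³| ≤ ‖v'‖₂² + (3/4) ‖v‖₂^{10/3}`.
Dividing by `3` gives the two bounds with `C = 1/4`.
-/

open MeasureTheory Filter Topology

section Lp

variable {α : Type*} [MeasurableSpace α] {μ : Measure α}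

theorem integral_abs_mul_abs_le_sqrt_mul_sqrt {f g : α → ℝ} (hf : MemLp f 2 μ)
    (hg : MemLp g 2 μ) :
    ∫ x, |f x| * |g x| ∂μ ≤ √(∫ x, f x ^ 2 ∂μ) * √(∫ x, g x ^ 2 ∂μ) := by
  have h2 : ENNReal.ofReal 2 = 2 := by norm_num
  have hL2 := integral_mul_le_Lp_mul_Lq_of_nonneg Real.HolderConjugate.two_two
    (ae_of_all μ fun x => abs_nonneg (f x)) (ae_of_all μ fun x => abs_nonneg (g x))
    (h2 ▸ hf.abs) (h2 ▸ hg.abs)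
  have habs_rpow : ∀ a : ℝ, |a| ^ (2 : ℝ) = a ^ 2 := fun a => by
    rw [Real.rpow_two, sq_abs]
  simpa only [habs_rpow, Real.sqrt_eq_rpow] using hL2

theorem abs_pow_three_le_mul_sq {a K : ℝ} (h : |a| ≤ K) : |a ^ 3| ≤ K * a ^ 2 := by
  rw [abs_pow, pow_succ', sq_abs]
  exact mul_le_mul_of_nonneg_right h (sq_nonneg a)

theorem integrable_pow_three_of_abs_le {f : α → ℝ} {K : ℝ} (hf : MemLp f 2 μ)
    (hK : ∀ᵐ x ∂μ, |f x| ≤ K) : Integrable (fun x => f x ^ 3) μ :=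
  (hf.integrable_sq.const_mul K).mono' (hf.1.pow 3) (hK.mono fun _ => abs_pow_three_le_mul_sq)

theorem abs_integral_pow_three_le {f : α → ℝ} {K : ℝ} (hf : MemLp f 2 μ)
    (hK : ∀ᵐ x ∂μ, |f x| ≤ K) : |∫ x, f x ^ 3 ∂μ| ≤ K * ∫ x, f x ^ 2 ∂μ := by
  rw [← integral_const_mul K (fun x => f x ^ 2)]
  exact norm_integral_le_of_norm_le (f := fun x => f x ^ 3) (hf.integrable_sq.const_mul K)
    (hK.mono fun _ => abs_pow_three_le_mul_sq)

end Lp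

/-- Agmon's inequality on `ℝ`. -/
theorem sq_le_two_mul_sqrt_integral_sq_mul_sqrt_integral_sq {v v' : ℝ → ℝ}
    (hv : ∀ x, HasDerivAt v (v' x) x) (hvL2 : MemLp v 2) (hv'L2 : MemLp v' 2)
    (hbot : Tendsto v atBot (𝓝 0)) (x : ℝ) :
    v x ^ 2 ≤ 2 * √(∫ t, v t ^ 2) * √(∫ t, v' t ^ 2) := by
  have hint : Integrable (fun t => 2 * (v t * v' t)) := (hvL2.integrable_mul hv'L2).const_mul 2
  have hftc : ∫ t in Set.Iic x, 2 * (v t * v' t) = v x ^ 2 := by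
    have hbot2 : Tendsto (fun t => v t ^ 2) atBot (𝓝 0) := by simpa using hbot.pow 2
    simpa using integral_Iic_of_hasDerivAt_of_tendsto' (m := 0)
      (fun t _ => ((hv t).pow 2).congr_deriv (by ring)) hint.integrableOn hbot2
  have hint_abs : Integrable (fun t => 2 * (|v t| * |v' t|)) :=
    ((hvL2.abs.integrable_mul hv'L2.abs).const_mul 2)
  calc v x ^ 2 = ∫ t in Set.Iic x, 2 * (v t * v' t) := hftc.symm
    _ ≤ ∫ t in Set.Iic x, 2 * (|v t| * |v' t|) :=
        setIntegral_mono hint.integrableOn hint_abs.integrableOn fun t => by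
          rw [← abs_mul]; gcongr; exact le_abs_self _
    _ ≤ ∫ t, 2 * (|v t| * |v' t|) :=
        setIntegral_le_integral hint_abs (ae_of_all _ fun t => by positivity)
    _ = 2 * ∫ t, |v t| * |v' t| := integral_const_mul 2 _
    _ ≤ 2 * √(∫ t, v t ^ 2) * √(∫ t, v' t ^ 2) := by
        rw [mul_assoc]; gcongr; exact integral_abs_mul_abs_le_sqrt_mul_sqrt hvL2 hv'L2

/-- Young's inequality with exponents `4` and `4/3`, in the form needed for `‖v‖_∞ ‖v‖₂²`. -/
theorem sqrt_two_mul_sqrt_mul_sqrt_mul_le {N D : ℝ} (hN : 0 ≤ N) (hD : 0 ≤ D) :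
    √(2 * √N * √D) * N ≤ D + 3 / 4 * N ^ ((5 : ℝ) / 3) := by
  have hsqrt : 2 * √N * √D = √(4 * D) * √N := by
    rw [Real.sqrt_mul (by norm_num), show (4 : ℝ) = 2 ^ 2 by norm_num, Real.sqrt_sq (by norm_num)]
    ring
  have hfactor :
      √(2 * √N * √D) * N = (4 * D) ^ (1 / 4 : ℝ) * (N ^ (5 / 3 : ℝ)) ^ (3 / 4 : ℝ) := by
    rw [hsqrt, Real.sqrt_mul (Real.sqrt_nonneg _), Real.sqrt_eq_rpow, Real.sqrt_eq_rpow,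
      Real.sqrt_eq_rpow, Real.sqrt_eq_rpow, ← Real.rpow_mul (by positivity), ← Real.rpow_mul hN,
      ← Real.rpow_mul hN, mul_assoc, ← Real.rpow_add_one' hN (by norm_num)]
    norm_num
  have hyoung := Real.geom_mean_le_arith_mean2_weighted (by norm_num : (0 : ℝ) ≤ 1 / 4)
    (by norm_num : (0 : ℝ) ≤ 3 / 4) (by positivity : 0 ≤ 4 * D)
    (Real.rpow_nonneg hN (5 / 3)) (by norm_num)
  linarith

/-- Two-sided control of the second KdV invariant
    I(v) = ∫ (v'² − v³/3) by the H¹ quantities. -/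
theorem kdv_second_invariant_bounds :
    ∃ C : ℝ, 0 < C ∧
      ∀ v : ℝ → ℝ, ContDiff ℝ 1 v →
        Integrable (fun x => (v x) ^ 2) →
        Integrable (fun x => (deriv v x) ^ 2) →
        Tendsto v atTop (nhds 0) → Tendsto v atBot (nhds 0) →
        (2 / 3) * (Real.sqrt (∫ x, (deriv v x) ^ 2)) ^ 2
            - C * (Real.sqrt (∫ x, (v x) ^ 2)) ^ ((10 : ℝ) / 3)
          ≤ ∫ x, ((deriv v x) ^ 2 - (v x) ^ 3 / 3) ∧
        ∫ x, ((deriv v x) ^ 2 - (v x) ^ 3 / 3)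
          ≤ (4 / 3) * (Real.sqrt (∫ x, (deriv v x) ^ 2)) ^ 2
            + C * (Real.sqrt (∫ x, (v x) ^ 2)) ^ ((10 : ℝ) / 3) := by
  refine ⟨1 / 4, by norm_num, fun v hv hv2 hv'2 _ hbot => ?_⟩
  have hvL2 : MemLp v 2 := (memLp_two_iff_integrable_sq hv.continuous.aestronglyMeasurable).2 hv2
  have hv'L2 : MemLp (deriv v) 2 :=
    (memLp_two_iff_integrable_sq (measurable_deriv v).aestronglyMeasurable).2 hv'2
  set N := ∫ x, v x ^ 2
  set D := ∫ x, deriv v x ^ 2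
  have hN : 0 ≤ N := integral_nonneg fun x => sq_nonneg _
  have hsup : ∀ᵐ x, |v x| ≤ √(2 * √N * √D) := ae_of_all _ fun x => Real.abs_le_sqrt <|
    sq_le_two_mul_sqrt_integral_sq_mul_sqrt_integral_sq
      (fun x => (hv.differentiable one_ne_zero x).hasDerivAt) hvL2 hv'L2 hbot x
  have hcube : |∫ x, v x ^ 3| ≤ D + 3 / 4 * N ^ ((5 : ℝ) / 3) :=
    (abs_integral_pow_three_le hvL2 hsup).trans
      (sqrt_two_mul_sqrt_mul_sqrt_mul_le hN (integral_nonneg fun x => sq_nonneg _))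
  have hI : ∫ x, (deriv v x ^ 2 - v x ^ 3 / 3) = D - (∫ x, v x ^ 3) / 3 := by
    rw [integral_sub hv'2 ((integrable_pow_three_of_abs_le hvL2 hsup).div_const 3), integral_div]
  have hsqrt_rpow : √N ^ ((10 : ℝ) / 3) = N ^ ((5 : ℝ) / 3) := by
    rw [Real.sqrt_eq_rpow, ← Real.rpow_mul hN]; norm_num
  rw [hI, Real.sq_sqrt (integral_nonneg fun x => sq_nonneg _), hsqrt_rpow]
  constructor <;> linarith [abs_le.1 hcube]
end

section
/- Let (H, 𝓑) be a measurable space and let (P_t)_{t ≥ 0} be a family of Markov kernels on H (i.e., for each t ≥ 0 and x ∈ H, P_t(x, ·) is a probability measure on 𝓑, x ↦ P_t(x, B) is measurable for each B ∈ 𝓑, and t ↦ P_t(x, B) is measurable) satisfying the Chapman–Kolmogorov relation P_{s+t}(x, B) = ∫_H P_t(y, B) P_s(x, dy) for all s, t ≥ 0, x ∈ H, B ∈ 𝓑. Let x₀ ∈ H, let ε > 0, and let K, A ∈ 𝓑 be such that P_i(x₀, H∖K) ≤ ε/2 for every integer i ≥ 0 and P_s(v, H∖A) ≤ ε/2 for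 every s ∈ [0,1] and every v ∈ K. Then for every integer n ≥ 1, (1/n) ∫₀ⁿ P_t(x₀, H∖A) dt ≤ ε. -/
open MeasureTheory Filter

/-- The averaging computation in the Krylov–Bogoliubov construction. -/
theorem krylov_bogoliubov_average_bound
    {H : Type*} [MeasurableSpace H]
    (P : ℝ → H → Measure H)
    (hprob : ∀ t : ℝ, 0 ≤ t → ∀ x : H, IsProbabilityMeasure (P t x))
    (hmeas_x : ∀ (t : ℝ) (B : Set H), MeasurableSet B →
      Measurable (fun x => P t x B))
    (hmeas_t : ∀ (x : H) (B : Set H), MeasurableSet B →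
      Measurable (fun t => P t x B))
    (hCK : ∀ (s t : ℝ), 0 ≤ s → 0 ≤ t → ∀ (x : H) (B : Set H),
      MeasurableSet B → P (s + t) x B = ∫⁻ y, P t y B ∂(P s x))
    (x₀ : H) (ε : ℝ) (hε : 0 < ε)
    (K A : Set H) (hK : MeasurableSet K) (hA : MeasurableSet A)
    (hKsmall : ∀ i : ℕ, ((P (i : ℝ) x₀) Kᶜ).toReal ≤ ε / 2)
    (hAsmall : ∀ s : ℝ, s ∈ Set.Icc (0 : ℝ) 1 → ∀ v ∈ K,
      ((P s v) Aᶜ).toReal ≤ ε / 2) :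
    ∀ n : ℕ, 1 ≤ n →
      (1 / (n : ℝ)) * ∫ t in (0 : ℝ)..(n : ℝ), ((P t x₀) Aᶜ).toReal ≤ ε := by
  have key : ∀ t : ℝ, 0 ≤ t → ((P t x₀) Aᶜ).toReal ≤ ε := by
    intro t ht
    set i : ℕ := ⌊t⌋₊ with hi
    have hif : (i : ℝ) ≤ t := Nat.floor_le ht
    set s : ℝ := t - i with hs
    have hs0 : 0 ≤ s := by simp only [hs]; linarith
    have hs1 : s ≤ 1 := by
      have := Nat.lt_floor_add_one t
      simp only [hs]; rw [hi]; linarith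
    have hteq : t = (i : ℝ) + s := by rw [hs]; ring
    have hCKt : P t x₀ Aᶜ = ∫⁻ y, P s y Aᶜ ∂(P i x₀) := by
      rw [hteq]; exact hCK i s (Nat.cast_nonneg i) hs0 x₀ Aᶜ hA.compl
    haveI hPi : IsProbabilityMeasure (P i x₀) := hprob i (Nat.cast_nonneg i) x₀
    have hKc : P i x₀ Kᶜ ≤ ENNReal.ofReal (ε / 2) := by
      rw [ENNReal.le_ofReal_iff_toReal_le (measure_ne_top _ _) (by linarith)]
      exact hKsmall i
    have hbound : ∀ y ∈ K, P s y Aᶜ ≤ ENNReal.ofReal (ε / 2) := by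
      intro y hy
      haveI := hprob s hs0 y
      rw [ENNReal.le_ofReal_iff_toReal_le (measure_ne_top _ _) (by linarith)]
      exact hAsmall s ⟨hs0, hs1⟩ y hy
    have hsplit : ∫⁻ y, P s y Aᶜ ∂(P i x₀)
        = (∫⁻ y in K, P s y Aᶜ ∂(P i x₀)) + ∫⁻ y in Kᶜ, P s y Aᶜ ∂(P i x₀) :=
      (lintegral_add_compl _ hK).symm
    have h1 : ∫⁻ y in K, P s y Aᶜ ∂(P i x₀) ≤ ENNReal.ofReal (ε / 2) := by
      calc ∫⁻ y in K, P s y Aᶜ ∂(P i x₀)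
          ≤ ∫⁻ _ in K, ENNReal.ofReal (ε / 2) ∂(P i x₀) := setLIntegral_mono
            measurable_const hbound
        _ = ENNReal.ofReal (ε / 2) * P i x₀ K := by
            rw [setLIntegral_const]
        _ ≤ ENNReal.ofReal (ε / 2) * 1 := by gcongr; exact prob_le_one
        _ = ENNReal.ofReal (ε / 2) := mul_one _
    have h2 : ∫⁻ y in Kᶜ, P s y Aᶜ ∂(P i x₀) ≤ ENNReal.ofReal (ε / 2) := by
      calc ∫⁻ y in Kᶜ, P s y Aᶜ ∂(P i x₀)
          ≤ ∫⁻ _ in Kᶜ, 1 ∂(P i x₀) := setLIntegral_mono measurable_const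
            (fun y _ => by haveI := hprob s hs0 y; exact prob_le_one)
        _ = P i x₀ Kᶜ := by rw [setLIntegral_const, mul_comm, mul_one]
        _ ≤ ENNReal.ofReal (ε / 2) := hKc
    have hfin : P t x₀ Aᶜ ≤ ENNReal.ofReal ε := by
      rw [hCKt, hsplit]
      calc (∫⁻ y in K, P s y Aᶜ ∂(P i x₀)) + ∫⁻ y in Kᶜ, P s y Aᶜ ∂(P i x₀)
          ≤ ENNReal.ofReal (ε / 2) + ENNReal.ofReal (ε / 2) := add_le_add h1 h2
        _ = ENNReal.ofReal ε := by
            rw [← ENNReal.ofReal_add (by linarith) (by linarith)]; ring_nf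
    exact ENNReal.toReal_le_of_le_ofReal hε.le hfin
  intro n hn
  have hn0 : (0 : ℝ) < n := by exact_mod_cast Nat.lt_of_lt_of_le Nat.zero_lt_one hn
  have hmeasf : Measurable (fun t => ((P t x₀) Aᶜ).toReal) :=
    (hmeas_t x₀ Aᶜ hA.compl).ennreal_toReal
  have hint : IntervalIntegrable (fun t => ((P t x₀) Aᶜ).toReal) volume 0 n := by
    rw [intervalIntegrable_iff_integrableOn_Ioc_of_le hn0.le]
    apply Integrable.mono' (integrable_const ε) hmeasf.aestronglyMeasurable.restrict
    filter_upwards [ae_restrict_mem measurableSet_Ioc] with t ht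
    rw [Real.norm_eq_abs, abs_of_nonneg ENNReal.toReal_nonneg]
    exact key t ht.1.le
  have hle : ∫ t in (0 : ℝ)..(n : ℝ), ((P t x₀) Aᶜ).toReal
      ≤ ∫ _ in (0 : ℝ)..(n : ℝ), ε := by
    apply intervalIntegral.integral_mono_on hn0.le hint intervalIntegrable_const
    intro t ht
    exact key t ht.1
  have hconst : ∫ _ in (0 : ℝ)..(n : ℝ), ε = n * ε := by
    rw [intervalIntegral.integral_const]; simp
  rw [hconst] at hle
  calc (1 / (n : ℝ)) * ∫ t in (0 : ℝ)..(n : ℝ), ((P t x₀) Aᶜ).toReal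
      ≤ (1 / (n : ℝ)) * (n * ε) := by
        apply mul_le_mul_of_nonneg_left hle (by positivity)
    _ = ε := by field_simp
end
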